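/- arXiv:2203.14690 — 3 statements merged into one kernel-verified Lean document; each statement's English description precedes it below -/
import Mathlib

section
/- Let g : (0,∞) → ℝ be continuous with g(s) = c₃ log s + O(1) as s → 0 for some c₃ ∈ ℝ, and define F(r) = g(r) − (2/r²) ∫₀^r s g(s) ds for r > 0. Then F(r) = O(1) as r → 0; in particular F is bounded on (0, 1/2). -/
/-!
Since `∫₀^r s log s ds = (r²/2) log r - r²/4`, the weighted mean `(2/r²) ∫₀^r s g(s) ds` of
`g = c₃ log + O(1)` equals `c₃ log r - c₃/2 + O(1)`, so the logarithms cancel in `F`. Away from `0`,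
`F` is continuous, hence bounded on compact intervals.
-/

open MeasureTheory Real Set

theorem integral_mul_log (r : ℝ) :
    ∫ s in (0:ℝ)..r, s * log s = r ^ 2 / 2 * log r - r ^ 2 / 4 := by
  have hderiv : ∀ x ∈ Ioo (min 0 r) (max 0 r),
      HasDerivWithinAt (fun s => s ^ 2 / 2 * log s - s ^ 2 / 4) (x * log x) (Ioi x) x := by
    rintro x ⟨hmin, hmax⟩
    have hx0 : x ≠ 0 := by
      rintro rfl
      rcases le_total 0 r with h | h <;> simp_all
    have h : HasDerivAt (fun s => s ^ 2 / 2 * log s - s ^ 2 / 4)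
        (2 * x / 2 * log x + x ^ 2 / 2 * x⁻¹ - 2 * x / 4) x := by
      simpa using (((hasDerivAt_pow 2 x).div_const 2).fun_mul (hasDerivAt_log hx0)).fun_sub
        ((hasDerivAt_pow 2 x).div_const 4)
    have e : 2 * x / 2 * log x + x ^ 2 / 2 * x⁻¹ - 2 * x / 4 = x * log x := by
      field_simp
      ring
    exact e ▸ h.hasDerivWithinAt
  have hcont : Continuous fun s : ℝ => s ^ 2 / 2 * log s - s ^ 2 / 4 := by
    have : (fun s : ℝ => s ^ 2 / 2 * log s - s ^ 2 / 4)
        = fun s => s * (s * log s) / 2 - s ^ 2 / 4 := by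
      ext s; ring
    rw [this]
    exact ((continuous_id.mul continuous_mul_log).div_const 2).sub (by fun_prop)
  simpa using intervalIntegral.integral_eq_sub_of_hasDeriv_right hcont.continuousOn hderiv
    (continuous_mul_log.intervalIntegrable 0 r)

section

variable {f g : ℝ → ℝ} {c C δ r : ℝ}

theorem exists_pos_bound_of_continuousOn_Ioi (hf : ContinuousOn f (Ioi 0)) (hδ : 0 < δ)
    (hb : ∀ s, 0 < s → s < δ → |f s| ≤ C) (b : ℝ) :
    ∃ M > 0, ∀ s, 0 < s → s ≤ b → |f s| ≤ M := by
  obtain ⟨M, hM⟩ := isCompact_Icc.exists_bound_of_continuousOn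
    (hf.mono fun s (hs : s ∈ Icc δ b) => hδ.trans_le hs.1)
  refine ⟨max (max C M) 1, by positivity, fun s hs hsb => ?_⟩
  rcases lt_or_ge s δ with hsδ | hsδ
  · exact (hb s hs hsδ).trans ((le_max_left _ _).trans (le_max_left _ _))
  · exact (hM s ⟨hsδ, hsb⟩).trans ((le_max_right _ _).trans (le_max_left _ _))

theorem intervalIntegrable_of_continuousOn_Ioi (hf : ContinuousOn f (Ioi 0)) (hδ : 0 < δ)
    (hb : ∀ s, 0 < s → s < δ → |f s| ≤ C) (hr : 0 ≤ r) :
    IntervalIntegrable f volume 0 r := by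
  obtain ⟨M, -, hM⟩ := exists_pos_bound_of_continuousOn_Ioi hf hδ hb r
  refine (intervalIntegrable_const (c := M)).mono_fun' ?_ ?_ <;> rw [uIoc_of_le hr]
  · exact (hf.mono fun s hs => hs.1).aestronglyMeasurable measurableSet_Ioc
  · filter_upwards [ae_restrict_mem measurableSet_Ioc] with s hs
    exact hM s hs.1 hs.2

theorem abs_integral_id_mul_le (hr : 0 ≤ r) (hb : ∀ s, 0 < s → s ≤ r → |f s| ≤ C) :
    |∫ s in (0:ℝ)..r, s * f s| ≤ C * r ^ 2 / 2 := by
  have := intervalIntegral.norm_integral_le_of_norm_le hr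
    (Filter.Eventually.of_forall fun s (hs : s ∈ Ioc 0 r) => show ‖s * f s‖ ≤ C * s by
      rw [norm_mul, Real.norm_of_nonneg hs.1.le, Real.norm_eq_abs, mul_comm]
      exact mul_le_mul_of_nonneg_right (hb s hs.1 hs.2) hs.1.le)
    ((continuous_const.mul continuous_id).intervalIntegrable (μ := volume) 0 r)
  rwa [intervalIntegral.integral_const_mul, integral_id, Real.norm_eq_abs, sq 0, mul_zero, sub_zero,
    ← mul_div_assoc] at this

theorem intervalIntegrable_id_mul_of_log (hg : ContinuousOn g (Ioi 0)) (hδ : 0 < δ)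
    (hb : ∀ s, 0 < s → s < δ → |g s - c * log s| ≤ C) (hr : 0 ≤ r) :
    IntervalIntegrable (fun s => s * g s) volume 0 r := by
  have hcont : ContinuousOn (fun s => g s - c * log s) (Ioi 0) :=
    hg.sub (continuousOn_const.mul (continuousOn_log.mono fun s hs => ne_of_gt hs))
  convert ((intervalIntegrable_of_continuousOn_Ioi hcont hδ hb hr).continuousOn_mul
    continuousOn_id).add ((continuous_mul_log.intervalIntegrable 0 r).const_mul c) using 1
  ext s
  simp only [id]
  ring

theorem continuousOn_sub_two_div_sq_mul_integral (hg : ContinuousOn g (Ioi 0)) (hδ : 0 < δ)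
    (hb : ∀ s, 0 < s → s < δ → |g s - c * log s| ≤ C) :
    ContinuousOn (fun r => g r - 2 / r ^ 2 * ∫ s in (0:ℝ)..r, s * g s) (Ioi 0) := by
  have hprim : ∀ x ∈ Ioi (0:ℝ), ContinuousAt (fun r => ∫ s in (0:ℝ)..r, s * g s) x := by
    intro x (hx : 0 < x)
    have hint := intervalIntegrable_id_mul_of_log hg hδ hb (r := x + 1) (by linarith)
    refine (intervalIntegral.continuousOn_primitive_interval' hint left_mem_uIcc).continuousAt ?_
    rw [uIcc_of_le (by linarith)]
    exact Icc_mem_nhds hx (by linarith)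
  have hweight : ContinuousOn (fun r : ℝ => 2 / r ^ 2) (Ioi 0) :=
    continuousOn_const.div (continuousOn_pow 2) fun r hr => pow_ne_zero 2 (ne_of_gt hr)
  exact hg.sub (hweight.mul fun x hx => (hprim x hx).continuousWithinAt)

theorem sub_two_div_sq_mul_integral_eq (c : ℝ) (hr : r ≠ 0)
    (hi : IntervalIntegrable (fun s => s * g s) volume 0 r) :
    g r - 2 / r ^ 2 * ∫ s in (0:ℝ)..r, s * g s
      = (g r - c * log r) - 2 / r ^ 2 * (∫ s in (0:ℝ)..r, s * (g s - c * log s)) + c / 2 := by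
  have hsplit : ∫ s in (0:ℝ)..r, s * (g s - c * log s)
      = (∫ s in (0:ℝ)..r, s * g s) - c * (r ^ 2 / 2 * log r - r ^ 2 / 4) := by
    have hlog := (continuous_mul_log.intervalIntegrable (μ := volume) 0 r).const_mul c
    rw [← integral_mul_log, ← intervalIntegral.integral_const_mul,
      ← intervalIntegral.integral_sub hi hlog]
    congr 1
    ext s
    ring
  rw [hsplit]
  field_simp
  ring

theorem abs_sub_two_div_sq_mul_integral_le (hg : ContinuousOn g (Ioi 0)) (hδ : 0 < δ)
    (hb : ∀ s, 0 < s → s < δ → |g s - c * log s| ≤ C) (hr : 0 < r) (hrδ : r < δ) :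
    |g r - 2 / r ^ 2 * ∫ s in (0:ℝ)..r, s * g s| ≤ 2 * C + |c| / 2 := by
  rw [sub_two_div_sq_mul_integral_eq c hr.ne' (intervalIntegrable_id_mul_of_log hg hδ hb hr.le)]
  have hmean : |2 / r ^ 2 * ∫ s in (0:ℝ)..r, s * (g s - c * log s)| ≤ C := by
    rw [abs_mul, abs_of_pos (by positivity)]
    calc 2 / r ^ 2 * |∫ s in (0:ℝ)..r, s * (g s - c * log s)|
        ≤ 2 / r ^ 2 * (C * r ^ 2 / 2) := by
          gcongr
          exact abs_integral_id_mul_le hr.le fun s hs hsr => hb s hs (hsr.trans_lt hrδ)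
      _ = C := by field_simp
  calc |(g r - c * log r) - 2 / r ^ 2 * (∫ s in (0:ℝ)..r, s * (g s - c * log s)) + c / 2|
      ≤ |g r - c * log r| + |2 / r ^ 2 * ∫ s in (0:ℝ)..r, s * (g s - c * log s)| + |c / 2| :=
        (abs_add_le _ _).trans (add_le_add_left (abs_sub _ _) _)
    _ ≤ C + C + |c| / 2 := by
        rw [abs_div, abs_two]
        gcongr
        exact hb r hr hrδ
    _ = 2 * C + |c| / 2 := by ring

end

/-- Cancellation of logarithmic singularities: if `g(s) = c₃ log s + O(1)` as `s → 0`, then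
`F(r) = g(r) − (2/r²) ∫₀^r s g(s) ds = O(1)` as `r → 0`; in particular `F` is bounded on
`(0, 1/2)`. -/
theorem stmt2 (g : ℝ → ℝ) (c₃ : ℝ) (hg : ContinuousOn g (Set.Ioi 0))
    (hO : ∃ C > (0:ℝ), ∃ δ > (0:ℝ), ∀ s : ℝ, 0 < s → s < δ → |g s - c₃ * Real.log s| ≤ C) :
    (∃ C > (0:ℝ), ∃ δ > (0:ℝ), ∀ r : ℝ, 0 < r → r < δ →
        |g r - 2 / r ^ 2 * ∫ s in (0:ℝ)..r, s * g s| ≤ C) ∧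
    (∃ C > (0:ℝ), ∀ r : ℝ, 0 < r → r < 1 / 2 →
        |g r - 2 / r ^ 2 * ∫ s in (0:ℝ)..r, s * g s| ≤ C) := by
  obtain ⟨C, hC, δ, hδ, hb⟩ := hO
  have hnear : ∀ r : ℝ, 0 < r → r < δ →
      |g r - 2 / r ^ 2 * ∫ s in (0:ℝ)..r, s * g s| ≤ 2 * C + |c₃| / 2 :=
    fun r hr hrδ => abs_sub_two_div_sq_mul_integral_le hg hδ hb hr hrδ
  obtain ⟨M, hM, hbound⟩ := exists_pos_bound_of_continuousOn_Ioi
    (continuousOn_sub_two_div_sq_mul_integral hg hδ hb) hδ hnear (1 / 2)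
  exact ⟨⟨2 * C + |c₃| / 2, by positivity, δ, hδ, hnear⟩,
    ⟨M, hM, fun r hr hr' => hbound r hr hr'.le⟩⟩
end

section
/- For ε > 0 define K_ε(x, y) = (x − y)^⊥/(2π|x − y|²) − (x − ε²y/|y|²)^⊥/(2π|x − ε²y/|y|²|²) for x, y ∈ ℝ² with |x|, |y| > ε and x ≠ y. Then for all such x, y with |x| > 2|y| one has |K_ε(x, y)| ≤ 4|y|/(π|x|²). -/
/-!
Identify `ℝ²` with `ℂ`. The rotation `perp2` is a linear isometry, and `a ↦ a / |a|²` is the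
inversion in the unit circle, which sends `a` and `b` to points at distance `|a - b| / (|a| |b|)`.
Here `a = x - y` and `b = x - (ε² / |y|²) y` differ by `(1 - ε² / |y|²) y`, of length at most `|y|`,
while `|x| > 2 |y|` makes both `|a|` and `|b|` at least `|x| / 2`; this even gives the bound
`2 |y| / (π |x|²)`.
-/

open MeasureTheory Real Set

noncomputable section

/-- Euclidean norm on `ℝ × ℝ`. -/
def norm2 (x : ℝ × ℝ) : ℝ := Real.sqrt (x.1 ^ 2 + x.2 ^ 2)

/-- Counterclockwise rotation by 90 degrees. -/
def perp2 (z : ℝ × ℝ) : ℝ × ℝ := (-z.2, z.1)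

theorem norm_inv_sq_smul_sub_inv_sq_smul {E : Type*} [NormedAddCommGroup E] [InnerProductSpace ℝ E]
    {a b : E} (ha : a ≠ 0) (hb : b ≠ 0) :
    ‖(‖a‖ ^ 2)⁻¹ • a - (‖b‖ ^ 2)⁻¹ • b‖ = ‖a - b‖ / (‖a‖ * ‖b‖) := by
  have h := EuclideanGeometry.dist_inversion_inversion ha hb 1
  simp only [EuclideanGeometry.inversion, vsub_eq_sub, sub_zero, vadd_eq_add,
    add_zero, dist_eq_norm, one_div, inv_pow, one_pow, ← div_eq_inv_mul] at h
  exact h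

theorem half_norm_le_norm_sub_smul {E : Type*} [SeminormedAddCommGroup E] [NormedSpace ℝ E]
    {x y : E} {r : ℝ} (hr0 : 0 ≤ r) (hr1 : r ≤ 1) (hxy : 2 * ‖y‖ ≤ ‖x‖) :
    ‖x‖ / 2 ≤ ‖x - r • y‖ := by
  have hry : ‖r • y‖ ≤ ‖y‖ := by
    rw [norm_smul, Real.norm_of_nonneg hr0]
    exact mul_le_of_le_one_left (norm_nonneg y) hr1
  linarith [norm_sub_norm_le x (r • y)]

theorem norm2_eq_norm_equivRealProdLm_symm (z : ℝ × ℝ) :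
    norm2 z = ‖Complex.equivRealProdLm.symm z‖ := by
  simp [norm2, Complex.norm_def, Complex.normSq_apply, sq]

theorem norm2_perp2 (z : ℝ × ℝ) : norm2 (perp2 z) = norm2 z := by
  simp [norm2, perp2, add_comm]

theorem smul_perp2_sub_smul_perp2 (s t : ℝ) (u v : ℝ × ℝ) :
    s • perp2 u - t • perp2 v = perp2 (s • u - t • v) := by
  ext <;> simp [perp2]; ring

theorem norm_inv_two_pi_sq_smul_sub_le {E : Type*} [NormedAddCommGroup E] [InnerProductSpace ℝ E]
    {x y : E} {r : ℝ} (hr0 : 0 ≤ r) (hr1 : r ≤ 1) (hxy : 2 * ‖y‖ < ‖x‖) :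
    ‖(2 * π * ‖x - y‖ ^ 2)⁻¹ • (x - y) - (2 * π * ‖x - r • y‖ ^ 2)⁻¹ • (x - r • y)‖ ≤
      2 * ‖y‖ / (π * ‖x‖ ^ 2) := by
  have hx : 0 < ‖x‖ := by linarith [norm_nonneg y]
  have hA : ‖x‖ / 2 ≤ ‖x - y‖ := by
    simpa using half_norm_le_norm_sub_smul zero_le_one le_rfl hxy.le
  have hB : ‖x‖ / 2 ≤ ‖x - r • y‖ := half_norm_le_norm_sub_smul hr0 hr1 hxy.le
  have hA0 : x - y ≠ 0 := norm_pos_iff.mp (by linarith)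
  have hB0 : x - r • y ≠ 0 := norm_pos_iff.mp (by linarith)
  have hAB : ‖(x - y) - (x - r • y)‖ ≤ ‖y‖ := by
    have hdiff : (x - y) - (x - r • y) = (r - 1) • y := by rw [sub_smul, one_smul]; abel
    rw [hdiff, norm_smul, Real.norm_eq_abs]
    exact mul_le_of_le_one_left (norm_nonneg y) (abs_le.mpr ⟨by linarith, by linarith⟩)
  have hsplit : ∀ a : E, (2 * π * ‖a‖ ^ 2)⁻¹ • a = (2 * π)⁻¹ • (‖a‖ ^ 2)⁻¹ • a := fun a => by
    rw [smul_smul, mul_inv]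
  calc _ = (2 * π)⁻¹ * (‖(x - y) - (x - r • y)‖ / (‖x - y‖ * ‖x - r • y‖)) := by
        rw [hsplit, hsplit, ← smul_sub, norm_smul, norm_inv_sq_smul_sub_inv_sq_smul hA0 hB0,
          Real.norm_of_nonneg (by positivity)]
    _ ≤ (2 * π)⁻¹ * (‖y‖ / (‖x‖ / 2 * (‖x‖ / 2))) := by gcongr
    _ = 2 * ‖y‖ / (π * ‖x‖ ^ 2) := by field_simp

/-- The kernel `K_ε(x,y)` of the Biot–Savart law in the exterior of the disk of radius `ε`
satisfies `|K_ε(x,y)| ≤ 4|y|/(π|x|²)` whenever `|x| > 2|y|` (and `|x|, |y| > ε`, `x ≠ y`). -/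
theorem stmt6 (ε : ℝ) (hε : 0 < ε) :
    ∀ x y : ℝ × ℝ, ε < norm2 x → ε < norm2 y → x ≠ y → 2 * norm2 y < norm2 x →
      norm2 ((2 * π * norm2 (x - y) ^ 2)⁻¹ • perp2 (x - y) -
          (2 * π * norm2 (x - (ε ^ 2 / norm2 y ^ 2) • y) ^ 2)⁻¹ •
            perp2 (x - (ε ^ 2 / norm2 y ^ 2) • y)) ≤
        4 * norm2 y / (π * norm2 x ^ 2) := by
  intro x y _ hy _ hxy
  set r := ε ^ 2 / norm2 y ^ 2
  have hr1 : r ≤ 1 := div_le_one_of_le₀ (pow_le_pow_left₀ hε.le hy.le 2) (sq_nonneg _)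
  rw [smul_perp2_sub_smul_perp2, norm2_perp2]
  simp only [norm2_eq_norm_equivRealProdLm_symm, map_sub, map_smul] at hxy ⊢
  calc _ ≤ 2 * ‖Complex.equivRealProdLm.symm y‖ / (π * ‖Complex.equivRealProdLm.symm x‖ ^ 2) :=
        norm_inv_two_pi_sq_smul_sub_le (by positivity) hr1 hxy
    _ ≤ _ := by gcongr; norm_num

end
end

section
/- Let ε ∈ (0, 1), q ∈ L¹ ∩ L^∞ on the exterior domain Π_ε = {x ∈ ℝ² : |x| > ε} with supp q ⊆ {|x| ≤ R} for some R > ε, and define K(q)(x) = ∫ K_ε(x, y) q(y) dy with K_ε(x,y) = (x−y)^⊥/(2π|x−y|²) − (x−ε²y/|y|²)^⊥/(2π|x−ε²y/|y|²|²). Then for every x with |x| > 2R one has |K(q)(x)| ≤ 4R‖q‖_{L¹}/(π|x|²). -/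
open MeasureTheory Real Set

noncomputable section

/-- The kernel of the Biot–Savart law in the exterior of the disk of radius `ε`. -/
def Kker (ε : ℝ) (x y : ℝ × ℝ) : ℝ × ℝ :=
  (2 * π * norm2 (x - y) ^ 2)⁻¹ • perp2 (x - y) -
    (2 * π * norm2 (x - (ε ^ 2 / norm2 y ^ 2) • y) ^ 2)⁻¹ •
      perp2 (x - (ε ^ 2 / norm2 y ^ 2) • y)

/-
In complex notation the point-vortex field `z^⊥ / (2π|z|²)` is `i / (2π z̄)`, so
`K_ε(x, y) = (i / 2π) (1 / conj (x - y) - 1 / conj (x - y*))` with `y* = ε² y / |y|²`, and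
`|K_ε(x, y)| = |y - y*| / (2π |x - y| |x - y*|)`. For `|y| ≤ R < |x| / 2` both `y` and its
reflection `y*` lie in the disk of radius `R`, so each factor in the denominator is at least
`|x| / 2` while `|y - y*| ≤ R`; hence `|K_ε(x, y)| ≤ 2R / (π |x|²)`. Integrating against `|q|`
gives the claim.
-/

open ComplexConjugate

lemma norm_inv_sub_inv {𝕜 : Type*} [NormedDivisionRing 𝕜] {a b : 𝕜} (ha : a ≠ 0) (hb : b ≠ 0) :
    ‖a⁻¹ - b⁻¹‖ = ‖a - b‖ / (‖a‖ * ‖b‖) := by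
  rw [inv_sub_inv' ha hb, norm_mul, norm_mul, norm_inv, norm_inv, norm_sub_rev]
  field_simp

lemma Complex.inv_conj_eq_smul (z : ℂ) : (conj z)⁻¹ = (‖z‖ ^ 2)⁻¹ • z := by
  rw [Complex.inv_def, Complex.conj_conj, Complex.normSq_conj, Complex.normSq_eq_norm_sq,
    Complex.real_smul, mul_comm]

def toComplex : (ℝ × ℝ) ≃L[ℝ] ℂ := Complex.equivRealProdCLM.symm

lemma norm2_eq_norm_toComplex (z : ℝ × ℝ) : norm2 z = ‖toComplex z‖ := by
  simp [norm2, toComplex, Complex.equivRealProdCLM_symm_apply, Complex.norm_add_mul_I]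

lemma norm2_smul (c : ℝ) (z : ℝ × ℝ) : norm2 (c • z) = |c| * norm2 z := by
  simp only [norm2_eq_norm_toComplex, map_smul, norm_smul, Real.norm_eq_abs]

lemma norm2_sub_le_add (x z : ℝ × ℝ) : norm2 x ≤ norm2 (x - z) + norm2 z := by
  simpa only [norm2_eq_norm_toComplex, map_sub] using
    norm_le_norm_sub_add (toComplex x) (toComplex z)

lemma toComplex_perp2 (z : ℝ × ℝ) : toComplex (perp2 z) = Complex.I * toComplex z := by
  simp [toComplex, perp2, Complex.equivRealProdCLM_symm_apply, Complex.ext_iff]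

lemma toComplex_vortex (z : ℝ × ℝ) :
    toComplex ((2 * π * norm2 z ^ 2)⁻¹ • perp2 z) =
      ((2 * π)⁻¹ : ℝ) • (Complex.I * (conj (toComplex z))⁻¹) := by
  rw [map_smul, toComplex_perp2, Complex.inv_conj_eq_smul, norm2_eq_norm_toComplex, mul_inv,
    mul_smul, mul_smul_comm]

lemma norm2_Kker {ε : ℝ} {x y : ℝ × ℝ} (hA : 0 < norm2 (x - y))
    (hB : 0 < norm2 (x - (ε ^ 2 / norm2 y ^ 2) • y)) :
    norm2 (Kker ε x y) = norm2 (y - (ε ^ 2 / norm2 y ^ 2) • y) /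
      (2 * π * (norm2 (x - y) * norm2 (x - (ε ^ 2 / norm2 y ^ 2) • y))) := by
  set y' := (ε ^ 2 / norm2 y ^ 2) • y
  have hK : toComplex (Kker ε x y) = ((2 * π)⁻¹ : ℝ) •
      (Complex.I * ((conj (toComplex (x - y)))⁻¹ - (conj (toComplex (x - y')))⁻¹)) := by
    rw [Kker, map_sub, toComplex_vortex, toComplex_vortex, ← smul_sub, ← mul_sub]
  rw [norm2_eq_norm_toComplex] at hA hB
  have hconj : ∀ w : ℂ, 0 < ‖w‖ → conj w ≠ 0 := fun w hw =>
    (map_ne_zero _).mpr (norm_pos_iff.mp hw)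
  rw [norm2_eq_norm_toComplex, hK, norm_smul, norm_mul, Complex.norm_I, one_mul,
    norm_inv_sub_inv (hconj _ hA) (hconj _ hB), ← map_sub, Complex.norm_conj, Complex.norm_conj,
    Complex.norm_conj, ← map_sub, sub_sub_sub_cancel_left, ← neg_sub y, map_neg, norm_neg,
    Real.norm_of_nonneg (by positivity)]
  simp only [← norm2_eq_norm_toComplex]
  field_simp

lemma norm2_Kker_le {ε R : ℝ} {x y : ℝ × ℝ} (hε : 0 < ε) (hεy : ε < norm2 y) (hyR : norm2 y ≤ R)
    (hx : 2 * R < norm2 x) : norm2 (Kker ε x y) ≤ 2 * R / (π * norm2 x ^ 2) := by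
  set c := ε ^ 2 / norm2 y ^ 2
  have hy : 0 < norm2 y := hε.trans hεy
  have hc0 : 0 ≤ c := by positivity
  have hc1 : c ≤ 1 := div_le_one_of_le₀ (pow_le_pow_left₀ hε.le hεy.le 2) (by positivity)
  have hcy : norm2 (c • y) ≤ R := by
    rw [norm2_smul, abs_of_nonneg hc0]
    nlinarith
  have hyy : norm2 (y - c • y) ≤ R := by
    rw [← one_smul ℝ y, smul_smul, mul_one, ← sub_smul, norm2_smul, abs_of_nonneg (by linarith)]
    nlinarith
  have far : ∀ z, norm2 z ≤ R → norm2 x / 2 ≤ norm2 (x - z) := fun z hz => by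
    linarith [norm2_sub_le_add x z]
  have hA := far y hyR
  have hB := far (c • y) hcy
  have hR0 : 0 < R := hε.trans (hεy.trans_le hyR)
  have hx2 : 0 < norm2 x / 2 := by linarith
  have hA0 := hx2.trans_le hA
  rw [norm2_Kker hA0 (hx2.trans_le hB)]
  calc _ ≤ R / (2 * π * (norm2 x / 2 * (norm2 x / 2))) := by gcongr
    _ = 2 * R / (π * norm2 x ^ 2) := by field_simp

lemma norm2_integral_le_of_norm2_le {α : Type*} [MeasurableSpace α] {μ : Measure α}
    {f : α → ℝ × ℝ} {g : α → ℝ} (hg : Integrable g μ) (h : ∀ a, norm2 (f a) ≤ g a) :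
    norm2 (∫ a, f a ∂μ) ≤ ∫ a, g a ∂μ := by
  rw [norm2_eq_norm_toComplex, ← ContinuousLinearEquiv.integral_comp_comm]
  exact norm_integral_le_of_norm_le hg
    (ae_of_all _ fun a => by simpa only [norm2_eq_norm_toComplex] using h a)

theorem stmt8_general (ε R : ℝ) (hε : 0 < ε) (hR : ε < R)
    (q : ℝ × ℝ → ℝ)
    (hq1 : Integrable q)
    (hsupp : ∀ x : ℝ × ℝ, R < norm2 x → q x = 0)
    (hout : ∀ x : ℝ × ℝ, norm2 x ≤ ε → q x = 0) :
    ∀ x : ℝ × ℝ, 2 * R < norm2 x →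
      norm2 (∫ y, q y • Kker ε x y) ≤ 4 * R * (∫ y, |q y|) / (π * norm2 x ^ 2) := by
  intro x hx
  have hbound : ∀ y, norm2 (q y • Kker ε x y) ≤ 4 * R / (π * norm2 x ^ 2) * |q y| := by
    intro y
    by_cases hqy : q y = 0
    · simp [hqy, norm2]
    have hεy : ε < norm2 y := lt_of_not_ge (mt (hout y) hqy)
    have hyR : norm2 y ≤ R := le_of_not_gt (mt (hsupp y) hqy)
    rw [norm2_smul, mul_comm]
    gcongr
    calc norm2 (Kker ε x y) ≤ 2 * R / (π * norm2 x ^ 2) := norm2_Kker_le hε hεy hyR hx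
      _ ≤ 4 * R / (π * norm2 x ^ 2) := by gcongr <;> linarith
  calc _ ≤ ∫ y, 4 * R / (π * norm2 x ^ 2) * |q y| :=
        norm2_integral_le_of_norm2_le (hq1.abs.const_mul _) hbound
    _ = 4 * R * (∫ y, |q y|) / (π * norm2 x ^ 2) := by rw [integral_const_mul]; ring

/-- Decay of the exterior Biot–Savart velocity field: if `q ∈ L¹ ∩ L^∞` is supported in
`{ε < |x| ≤ R}`, then `|K(q)(x)| ≤ 4R‖q‖_{L¹}/(π|x|²)` for `|x| > 2R`. -/
theorem stmt8 (ε R : ℝ) (hε : 0 < ε) (hε1 : ε < 1) (hR : ε < R)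
    (q : ℝ × ℝ → ℝ)
    (hq1 : Integrable q) (hqinf : ∃ C : ℝ, ∀ x, |q x| ≤ C)
    (hsupp : ∀ x : ℝ × ℝ, R < norm2 x → q x = 0)
    (hout : ∀ x : ℝ × ℝ, norm2 x ≤ ε → q x = 0) :
    ∀ x : ℝ × ℝ, 2 * R < norm2 x →
      norm2 (∫ y, q y • Kker ε x y) ≤ 4 * R * (∫ y, |q y|) / (π * norm2 x ^ 2) :=
  stmt8_general ε R hε hR q hq1 hsupp hout
end
end
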